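/- arXiv:2503.06714 — 6 statements merged into one kernel-verified Lean document; each statement's English description precedes it below -/
import Mathlib

section
/- Let G be a finite group viewed as the conjugation rack (G, ▷) with a ▷ b = a b a⁻¹. A subset M ⊆ G is a maximal proper subrack of G if and only if M is the union of all conjugacy classes of G except exactly one. -/
/-!
A proper subrack `S` of a finite group `G` misses a whole conjugacy class. If `S` generates `G`,
then `S` is stable under conjugation by all of `G`, hence a union of conjugacy classes. Otherwise
`⟨S⟩` is a proper subgroup, and by Jordan's theorem some conjugacy class avoids every conjugate
of it. Complements of conjugacy classes are proper subracks and pairwise incomparable, so they are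
exactly the maximal proper subracks.
-/

def IsSubrack {G : Type*} [Group G] (S : Set G) : Prop :=
  ∀ a ∈ S, ∀ b ∈ S, a * b * a⁻¹ ∈ S

namespace MulAction

variable {G X : Type*} [Group G] [MulAction G X]

/-- Jordan's theorem. By Burnside's lemma a transitive action has on average one fixed point,
while the identity fixes more than one. -/
theorem exists_fixedBy_eq_empty [Finite G] [IsPretransitive G X] (hX : 1 < Nat.card X) :
    ∃ g : G, fixedBy X g = ∅ := by
  classical
  have : Finite X := Nat.finite_of_card_ne_zero (by omega)
  have : Nonempty X := (Nat.card_pos_iff.mp (by omega)).1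
  have := Fintype.ofFinite G
  have := Fintype.ofFinite X
  have : Unique (orbitRel.Quotient G X) :=
    ((pretransitive_iff_unique_quotient_of_nonempty G X).mp inferInstance).some
  by_contra! h
  have burnside := sum_card_fixedBy_eq_card_orbits_mul_card_group G X
  rw [Fintype.card_unique, one_mul, ← Finset.card_univ, Finset.card_eq_sum_ones] at burnside
  refine burnside.not_gt (Finset.sum_lt_sum (fun g _ => ?_) ⟨1, Finset.mem_univ _, ?_⟩)
  · exact Fintype.card_pos_iff.mpr (h g).to_subtype
  · simpa [fixedBy_one_eq_univ, ← Nat.card_eq_fintype_card] using hX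

end MulAction

section ConjugacyClasses

variable {G : Type*}

theorem compl_conjugatesOf_ne_univ [Monoid G] (g : G) : (conjugatesOf g)ᶜ ≠ Set.univ :=
  fun h => (h ▸ Set.mem_univ g : g ∈ (conjugatesOf g)ᶜ) mem_conjugatesOf_self

theorem conjugatesOf_eq_of_subset [Monoid G] {g h : G}
    (hgh : conjugatesOf g ⊆ conjugatesOf h) : conjugatesOf g = conjugatesOf h :=
  (isConj_iff_conjugatesOf_eq.mp (hgh mem_conjugatesOf_self)).symm

theorem Subgroup.exists_disjoint_conjugatesOf [Group G] [Finite G] {K : Subgroup G}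
    (hK : K ≠ ⊤) : ∃ g : G, Disjoint (conjugatesOf g) K := by
  obtain ⟨g, hg⟩ := MulAction.exists_fixedBy_eq_empty (G := G) (X := G ⧸ K)
    (K.one_lt_index_of_ne_top hK)
  refine ⟨g, Set.disjoint_left.mpr fun y hy hyK => ?_⟩
  obtain ⟨a, rfl⟩ := isConj_iff.mp hy
  have : ((a⁻¹ : G) : G ⧸ K) ∈ MulAction.fixedBy (G ⧸ K) g := by
    change ((g * a⁻¹ : G) : G ⧸ K) = _
    rw [QuotientGroup.eq]
    simpa [mul_assoc] using K.inv_mem hyK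
  simp [hg] at this

end ConjugacyClasses

section Subrack

variable {G : Type*} [Group G]

theorem isSubrack_compl_conjugatesOf (g : G) : IsSubrack (conjugatesOf g)ᶜ :=
  fun a _ b hb hab => hb (hab.trans (isConj_iff.mpr ⟨a⁻¹, by group⟩))

theorem IsSubrack.conj_mem_of_mem_closure [Finite G] {S : Set G} (hS : IsSubrack S) {k : G}
    (hk : k ∈ Subgroup.closure S) {b : G} (hb : b ∈ S) : k * b * k⁻¹ ∈ S := by
  rw [← Subgroup.mem_toSubmonoid, Subgroup.closure_toSubmonoid_of_finite] at hk
  induction hk using Submonoid.closure_induction generalizing b with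
  | mem x hx => exact hS x hx b hb
  | one => simpa using hb
  | mul x y _ _ hx hy => simpa [mul_assoc] using hx (hy hb)

theorem IsSubrack.exists_subset_compl_conjugatesOf [Finite G] {S : Set G} (hS : IsSubrack S)
    (hne : S ≠ Set.univ) : ∃ g : G, S ⊆ (conjugatesOf g)ᶜ := by
  by_cases hK : Subgroup.closure S = ⊤
  · obtain ⟨g, hg⟩ := (Set.ne_univ_iff_exists_notMem S).mp hne
    refine ⟨g, fun y hy hgy => hg ?_⟩
    obtain ⟨k, rfl⟩ := isConj_iff.mp hgy.symm
    exact hS.conj_mem_of_mem_closure (hK ▸ Subgroup.mem_top k) hy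
  · obtain ⟨g, hg⟩ := Subgroup.exists_disjoint_conjugatesOf hK
    exact ⟨g, fun y hy hgy => Set.disjoint_left.mp hg hgy (Subgroup.subset_closure hy)⟩

end Subrack

/-- A subset M of a finite group G is a maximal proper subrack of the group rack
iff M is the union of all conjugacy classes except exactly one, i.e. the complement
of a single conjugacy class. -/
theorem stmt4 {G : Type*} [Group G] [Finite G] (M : Set G) (hM : IsSubrack M) :
    (M ≠ Set.univ ∧
      ∀ T : Set G, IsSubrack T → M ⊆ T → T = M ∨ T = Set.univ) ↔
    ∃ g : G, M = {y : G | IsConj g y}ᶜ := by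
  constructor
  · rintro ⟨hne, hmax⟩
    obtain ⟨g, hg⟩ := hM.exists_subset_compl_conjugatesOf hne
    exact ⟨g, ((hmax _ (isSubrack_compl_conjugatesOf g) hg).resolve_right
      (compl_conjugatesOf_ne_univ g)).symm⟩
  · rintro ⟨g, rfl⟩
    refine ⟨compl_conjugatesOf_ne_univ g, fun T hT hgT => or_iff_not_imp_right.mpr fun hne => ?_⟩
    obtain ⟨h, hTh⟩ := hT.exists_subset_compl_conjugatesOf hne
    rw [conjugatesOf_eq_of_subset (Set.compl_subset_compl.mp (hgT.trans hTh))] at hTh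
    exact hTh.antisymm hgT
end

section
/- Let G be a finite group with exactly c conjugacy classes. Then the subrack lattice R(G) of the group rack (G, ▷) has exactly c coatoms (maximal elements below G). -/
/-!
For a subrack `S` of a finite group, conjugation by `a ∈ S` maps the finite set `S` injectively
into itself, hence onto itself, so the subgroup generated by `S` normalizes `S`. If that subgroup
is all of `G`, then `S` is a union of conjugacy classes; otherwise, by Jordan's lemma, it misses a
whole conjugacy class. Either way a proper subrack lies in the complement of a conjugacy class,
and these complements are themselves subracks. Hence the coatoms of the subrack lattice are
exactly the complements of the conjugacy classes.
-/

open Set Subgroup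
open scoped Pointwise

namespace ConjClasses

variable {α : Type*} [Monoid α]

theorem mem_carrier_mk_iff {a b : α} : b ∈ (ConjClasses.mk a).carrier ↔ IsConj a b :=
  mem_carrier_iff_mk_eq.trans mk_eq_mk_iff_isConj |>.trans isConj_comm

theorem carrier_injective : Function.Injective (carrier (α := α)) := by
  intro c d h
  simp only [carrier_eq_preimage_mk] at h
  exact singleton_injective (preimage_injective.mpr mk_surjective h)

theorem compl_carrier_ne_univ (c : ConjClasses α) : c.carrierᶜ ≠ univ := by
  obtain ⟨a, rfl⟩ := mk_surjective c
  exact (ne_univ_iff_exists_notMem _).mpr ⟨a, not_not.mpr mem_carrier_mk⟩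

end ConjClasses

section

variable {G : Type*} [Group G]

theorem Subgroup.exists_forall_conj_notMem [Finite G] {H : Subgroup G} (hH : H ≠ ⊤) :
    ∃ g : G, ∀ x : G, x * g * x⁻¹ ∉ H := by
  classical
  -- Otherwise the conjugates of `H`, indexed by `G ⧸ H`, cover `G`. Their inverse indices sum
  -- to `1`, so by Neumann's coset-cover lemma they are pairwise disjoint; yet all contain `1`.
  by_contra! hcover
  have := Fintype.ofFinite (G ⧸ H)
  let K : G ⧸ H → Subgroup G := fun q ↦ H.map (MulAut.conj q.out : G →* G)
  have hK_index (q : G ⧸ H) : (K q).index = H.index := H.index_map_equiv _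
  have hK_cover : ⋃ q ∈ Finset.univ, (1 : G) • (K q : Set G) = univ := by
    refine eq_univ_of_forall fun y ↦ ?_
    obtain ⟨x, hx⟩ := hcover y
    obtain ⟨h, hout⟩ := QuotientGroup.mk_out_eq_mul H x⁻¹
    refine mem_biUnion
      (Finset.mem_coe.mpr (Finset.mem_univ (QuotientGroup.mk x⁻¹ : G ⧸ H))) ?_
    rw [one_smul, SetLike.mem_coe]
    refine mem_map_equiv.mpr ?_
    rw [MulAut.conj_symm_apply, hout, show (x⁻¹ * (h : G))⁻¹ * y * (x⁻¹ * h) =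
      (h : G)⁻¹ * (x * y * x⁻¹) * h by group]
    exact H.mul_mem (H.mul_mem (H.inv_mem h.2) hx) h.2
  have hsum : ∑ q, ((K q).index : ℚ)⁻¹ = 1 := by
    have : (H.index : ℚ) ≠ 0 := by exact_mod_cast FiniteIndex.index_ne_zero
    simp [hK_index, ← Nat.card_eq_fintype_card, ← index_eq_card, this]
  have hdisj := pairwiseDisjoint_leftCoset_cover_of_sum_inv_index_eq_one hK_cover hsum
  have : Nontrivial (G ⧸ H) := by
    rw [← Finite.one_lt_card_iff_nontrivial, ← index_eq_card]
    exact one_lt_index_of_ne_top hH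
  obtain ⟨q₁, q₂, hq⟩ := exists_pair_ne (G ⧸ H)
  have hK_finiteIndex (q : G ⧸ H) : q ∈ Finset.univ.filter fun q ↦ (K q).FiniteIndex :=
    Finset.mem_filter.mpr
      ⟨Finset.mem_univ q, ⟨hK_index q ▸ FiniteIndex.index_ne_zero⟩⟩
  have h_one (q : G ⧸ H) : (1 : G) ∈ (1 : G) • (K q : Set G) := by simp
  exact disjoint_left.mp (hdisj (hK_finiteIndex q₁) (hK_finiteIndex q₂) hq)
    (h_one q₁) (h_one q₂)

theorem ConjClasses.isSubrack_compl_carrier (c : ConjClasses G) : IsSubrack c.carrierᶜ := by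
  obtain ⟨g, rfl⟩ := ConjClasses.mk_surjective c
  intro a _ b hb hab
  simp only [mem_compl_iff, ConjClasses.mem_carrier_mk_iff] at hb hab
  exact hb (hab.trans (isConj_iff.mpr ⟨a, rfl⟩).symm)

namespace IsSubrack

variable {S : Set G}

theorem closure_le_normalizer [Finite G] (hS : IsSubrack S) : closure S ≤ normalizer S := by
  refine (closure_le _).mpr fun a ha s ↦ ⟨hS a ha s, fun has ↦ ?_⟩
  have hconj_bij : BijOn (fun x ↦ a * x * a⁻¹) S S :=
    (S.toFinite.injOn_iff_bijOn_of_mapsTo (hS a ha)).mp fun x _ y _ h ↦ by simpa using h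
  obtain ⟨x, hx, hxs⟩ := hconj_bij.surjOn has
  rwa [show x = s by simpa using hxs] at hx

theorem exists_disjoint_conjClasses [Finite G] (hS : IsSubrack S) (hne : S ≠ univ) :
    ∃ c : ConjClasses G, Disjoint S c.carrier := by
  by_cases htop : closure S = ⊤
  · obtain ⟨g, hg⟩ := (ne_univ_iff_exists_notMem S).mp hne
    refine ⟨ConjClasses.mk g, disjoint_left.mpr fun s hs hgs ↦ hg ?_⟩
    obtain ⟨x, rfl⟩ := isConj_iff.mp (ConjClasses.mem_carrier_mk_iff.mp hgs).symm
    exact (hS.closure_le_normalizer (htop ▸ mem_top x) _).mp hs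
  · obtain ⟨g, hg⟩ := exists_forall_conj_notMem htop
    refine ⟨ConjClasses.mk g, disjoint_left.mpr fun s hs hgs ↦ ?_⟩
    obtain ⟨x, rfl⟩ := isConj_iff.mp (ConjClasses.mem_carrier_mk_iff.mp hgs)
    exact hg x (subset_closure hs)

end IsSubrack

def IsMaximalSubrack (M : Set G) : Prop :=
  IsSubrack M ∧ M ≠ univ ∧ ∀ T : Set G, IsSubrack T → M ⊂ T → T = univ

theorem isMaximalSubrack_iff [Finite G] {M : Set G} :
    IsMaximalSubrack M ↔ ∃ c : ConjClasses G, c.carrierᶜ = M := by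
  constructor
  · rintro ⟨hM, hne, hmax⟩
    obtain ⟨c, hc⟩ := hM.exists_disjoint_conjClasses hne
    refine ⟨c, (subset_compl_iff_disjoint_right.mpr hc).eq_or_ssubset.elim Eq.symm
      fun hlt ↦ ?_⟩
    exact absurd (hmax _ c.isSubrack_compl_carrier hlt) c.compl_carrier_ne_univ
  · rintro ⟨c, rfl⟩
    refine ⟨c.isSubrack_compl_carrier, c.compl_carrier_ne_univ, fun T hT hlt ↦ ?_⟩
    by_contra hT_ne
    obtain ⟨d, hd⟩ := hT.exists_disjoint_conjClasses hT_ne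
    obtain ⟨t, htT, htc⟩ := exists_of_ssubset hlt
    obtain ⟨g, rfl⟩ := ConjClasses.mk_surjective d
    have hgT : g ∉ T := disjoint_right.mp hd ConjClasses.mem_carrier_mk
    have hgc : ConjClasses.mk g = c :=
      ConjClasses.mem_carrier_iff_mk_eq.mp (not_not.mp fun hg ↦ hgT (hlt.subset hg))
    exact disjoint_left.mp hd htT (hgc ▸ not_not.mp htc)

end

/-- The subrack lattice of a finite group G has exactly as many coatoms as G has
conjugacy classes. -/
theorem stmt5 {G : Type*} [Group G] [Finite G] :
    Nat.card {M : Set G // IsSubrack M ∧ M ≠ Set.univ ∧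
        ∀ T : Set G, IsSubrack T → M ⊂ T → T = Set.univ} =
      Nat.card (ConjClasses G) := by
  calc Nat.card {M : Set G // IsMaximalSubrack M}
      = Nat.card (range fun c : ConjClasses G ↦ c.carrierᶜ) :=
        Nat.card_congr (Equiv.subtypeEquivRight fun _ ↦ isMaximalSubrack_iff)
    _ = Nat.card (ConjClasses G) :=
        Nat.card_range_of_injective (compl_injective.comp ConjClasses.carrier_injective)
end

section
/- Let G be a finite group and let A be a subrack of the group rack (G, ▷). The interval [∅, A] in the subrack lattice R(G) is a Boolean algebra if and only if every pair of elements of A commutes and in that case every nonempty subset of A is a subrack; in particular A (together with the identity if needed as a subgroup closure) consists of pairwise commuting elements. -/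
/-- The interval [∅, A] of the subrack lattice, as a poset: subracks contained in A. -/
def IntervalBelow {G : Type*} [Group G] (A : Set G) : Type _ :=
  {S : Set G // IsSubrack S ∧ S ⊆ A}

instance {G : Type*} [Group G] (A : Set G) : PartialOrder (IntervalBelow A) :=
  Subtype.partialOrder _

/-!
If `a, b ∈ A` do not commute, then `c = a b a⁻¹ ∈ A` differs from both `a` and `b`, yet every
subrack containing `a` and `b` contains `c`. Singletons are atoms of `[∅, A]`, and in a powerset
lattice an atom below a union lies below one of the two sets, so transporting `{c} ≤ {a} ⊔ {b}`
along the isomorphism forces `c = a` or `c = b`. Conversely, conjugation by an element that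
commutes with `b` fixes `b`, so every subset of a commuting set is a subrack and `[∅, A]` is the
full powerset of `A`.
-/

section

variable {G : Type*} [Group G]

lemma isSubrack_of_commute {S : Set G} (h : ∀ a ∈ S, ∀ b ∈ S, a * b = b * a) :
    IsSubrack S := by
  intro a ha b hb
  rwa [h a ha b hb, mul_inv_cancel_right]

lemma isSubrack_singleton (a : G) : IsSubrack ({a} : Set G) :=
  isSubrack_of_commute (by rintro _ rfl _ rfl; rfl)

lemma commute_of_conj_eq_or {a b : G} (h : a * b * a⁻¹ = a ∨ a * b * a⁻¹ = b) :
    a * b = b * a := by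
  rcases h with h | h
  · rw [mul_left_cancel (mul_inv_eq_iff_eq_mul.mp h)]
  · exact mul_inv_eq_iff_eq_mul.mp h

namespace IntervalBelow

variable {A : Set G}

instance : OrderBot (IntervalBelow A) where
  bot := ⟨∅, fun _ h => h.elim, Set.empty_subset A⟩
  bot_le S := Set.empty_subset S.1

def singleton {a : G} (ha : a ∈ A) : IntervalBelow A :=
  ⟨{a}, isSubrack_singleton a, Set.singleton_subset_iff.mpr ha⟩

lemma isAtom_singleton {a : G} (ha : a ∈ A) : IsAtom (singleton ha) := by
  refine ⟨fun h => (Set.singleton_ne_empty a) (congrArg Subtype.val h), fun S hS => ?_⟩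
  obtain h | h := Set.subset_singleton_iff_eq.mp hS.le
  · exact Subtype.ext h
  · exact absurd (Subtype.ext h) hS.ne

lemma conj_eq_or_of_orderIso {β : Type*} (e : IntervalBelow A ≃o Set β) (hA : IsSubrack A)
    {a b : G} (ha : a ∈ A) (hb : b ∈ A) : a * b * a⁻¹ = a ∨ a * b * a⁻¹ = b := by
  set join := e.symm (e (singleton ha) ∪ e (singleton hb))
  have ha_join : a ∈ join.1 := e.le_symm_apply.mpr Set.subset_union_left rfl
  have hb_join : b ∈ join.1 := e.le_symm_apply.mpr Set.subset_union_right rfl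
  have hc : a * b * a⁻¹ ∈ A := hA a ha b hb
  have hc_le : e (singleton hc) ⊆ e (singleton ha) ∪ e (singleton hb) :=
    e.le_symm_apply.mp <| Set.singleton_subset_iff.mpr (join.2.1 a ha_join b hb_join)
  obtain ⟨x, hx⟩ := Set.isAtom_iff.mp ((e.isAtom_iff _).mpr (isAtom_singleton hc))
  have eq_of_mem {y : G} {hy : y ∈ A} (hxy : x ∈ e (singleton hy)) : a * b * a⁻¹ = y :=
    e.le_iff_le.mp (hx ▸ Set.singleton_subset_iff.mpr hxy) rfl
  rw [hx, Set.singleton_subset_iff] at hc_le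
  exact hc_le.imp eq_of_mem eq_of_mem

lemma val_subset_range_val (S : IntervalBelow A) : S.1 ⊆ Set.range (Subtype.val : A → G) :=
  Subtype.range_val.symm.subset.trans' S.2.2

def orderIsoSetOfForallSubset (h : ∀ S ⊆ A, IsSubrack S) : IntervalBelow A ≃o Set A where
  toFun S := Subtype.val ⁻¹' S.1
  invFun T :=
    ⟨Subtype.val '' T, h _ (Subtype.coe_image_subset A T), Subtype.coe_image_subset A T⟩
  left_inv S := Subtype.ext <| Set.image_preimage_eq_of_subset S.val_subset_range_val
  right_inv T := Set.preimage_image_eq T Subtype.val_injective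
  map_rel_iff' {S _} := Set.preimage_subset_preimage_iff S.val_subset_range_val

end IntervalBelow

end

/-- The interval [∅, A] is a Boolean algebra (order-isomorphic to a powerset of a
finite set) iff the elements of A pairwise commute; and in that case every subset
of A is a subrack. -/
theorem stmt6 {G : Type*} [Group G] [Finite G] (A : Set G) (hA : IsSubrack A) :
    ((∃ (β : Type) (_ : Finite β), Nonempty (IntervalBelow A ≃o Set β)) ↔
      ∀ a ∈ A, ∀ b ∈ A, a * b = b * a) ∧
    ((∀ a ∈ A, ∀ b ∈ A, a * b = b * a) → ∀ S : Set G, S ⊆ A → IsSubrack S) := by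
  have subsets_subrack (h : ∀ a ∈ A, ∀ b ∈ A, a * b = b * a) (S : Set G) (hS : S ⊆ A) :
      IsSubrack S :=
    isSubrack_of_commute fun a ha b hb => h a (hS ha) b (hS hb)
  refine ⟨⟨?_, fun h => ?_⟩, subsets_subrack⟩
  · rintro ⟨β, _, ⟨e⟩⟩ a ha b hb
    exact commute_of_conj_eq_or (IntervalBelow.conj_eq_or_of_orderIso e hA ha hb)
  · obtain ⟨n, ⟨ε⟩⟩ := Finite.exists_equiv_fin A
    exact ⟨Fin n, inferInstance,
      ⟨(IntervalBelow.orderIsoSetOfForallSubset (subsets_subrack h)).trans ε.toOrderIsoSet⟩⟩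
end

section
/- Let G be a finite group, N ⊴ G a normal subgroup, and a₁N, …, aₖN cosets of N. Then the join of the subracks a₁N, …, aₖN in the subrack lattice R(G) equals the union of those cosets of N that intersect the subrack generated by {a₁, …, aₖ} in (G, ▷); equivalently, it is the union of the cosets of N containing ⟨a₁,…,aₖ⟩_rk. -/
/-!
The right-hand side is the preimage, under `G → G ⧸ N`, of the image of `⟨a₁, …, aₖ⟩_rk`.
Images and preimages of subracks under group homomorphisms are subracks, so it is a subrack
containing every `aᵢN`, which gives one inclusion. Conversely, `⟨a₁, …, aₖ⟩_rk` lies in the join,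
and the join is a union of cosets of `N`: since `x ▷ (y n') = (x ▷ y) n` for `n' = x⁻¹ n x`,
the set of `g` with `gN` inside the join is a subrack containing the `aᵢN`.
-/

open scoped Pointwise

/-- The subrack generated by a subset: the intersection of all subracks containing it. -/
def rackClosure {G : Type*} [Group G] (S : Set G) : Set G :=
  ⋂₀ {T : Set G | IsSubrack T ∧ S ⊆ T}

section Subrack

variable {G H : Type*} [Group G] [Group H]

lemma subset_rackClosure (S : Set G) : S ⊆ rackClosure S :=
  fun _ hx _ hT => hT.2 hx

lemma isSubrack_rackClosure (S : Set G) : IsSubrack (rackClosure S) :=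
  fun _ hx _ hy T hT => hT.1 _ (hx T hT) _ (hy T hT)

lemma rackClosure_subset {S T : Set G} (hT : IsSubrack T) (hST : S ⊆ T) :
    rackClosure S ⊆ T :=
  fun _ hx => hx T ⟨hT, hST⟩

lemma rackClosure_mono {S T : Set G} (h : S ⊆ T) : rackClosure S ⊆ rackClosure T :=
  rackClosure_subset (isSubrack_rackClosure T) (h.trans (subset_rackClosure T))

lemma IsSubrack.image {S : Set G} (hS : IsSubrack S) (f : G →* H) : IsSubrack (f '' S) := by
  rintro _ ⟨x, hx, rfl⟩ _ ⟨y, hy, rfl⟩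
  exact ⟨x * y * x⁻¹, hS x hx y hy, by simp⟩

lemma IsSubrack.preimage {T : Set H} (hT : IsSubrack T) (f : G →* H) : IsSubrack (f ⁻¹' T) :=
  fun x hx y hy => by simpa using hT _ hx _ hy

lemma mul_mem_rackClosure_of_forall_mul_mem {N : Subgroup G} [N.Normal] {S : Set G}
    (hS : ∀ g ∈ S, ∀ n ∈ N, g * n ∈ S) {g n : G} (hg : g ∈ rackClosure S) (hn : n ∈ N) :
    g * n ∈ rackClosure S := by
  suffices IsSubrack {g | ∀ n ∈ N, g * n ∈ rackClosure S} from
    rackClosure_subset this (fun g hg n hn => subset_rackClosure S (hS g hg n hn)) hg n hn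
  intro x hx y hy n hn
  have hx' : x ∈ rackClosure S := by simpa using hx 1 N.one_mem
  have hconj : x⁻¹ * n * x ∈ N := by simpa using Subgroup.Normal.conj_mem ‹_› n hn x⁻¹
  have key := isSubrack_rackClosure S x hx' _ (hy _ hconj)
  rwa [show x * (y * (x⁻¹ * n * x)) * x⁻¹ = x * y * x⁻¹ * n by group] at key

end Subrack

theorem stmt10_general {G : Type*} [Group G] (N : Subgroup G) [N.Normal]
    (k : ℕ) (a : Fin k → G) :
    rackClosure (⋃ i : Fin k, (a i) • (N : Set G)) =
      {g : G | ∃ y ∈ rackClosure (Set.range a), y⁻¹ * g ∈ N} := by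
  set U := ⋃ i : Fin k, (a i) • (N : Set G)
  have hrange : Set.range a ⊆ U := by
    rintro _ ⟨i, rfl⟩
    exact Set.mem_iUnion.2 ⟨i, (mem_leftCoset_iff _).2 (by simp)⟩
  have hcosets : ∀ g ∈ U, ∀ n ∈ N, g * n ∈ U := by
    intro g hg n hn
    obtain ⟨i, hi⟩ := Set.mem_iUnion.1 hg
    rw [mem_leftCoset_iff] at hi
    exact Set.mem_iUnion.2 ⟨i, (mem_leftCoset_iff _).2 (by simpa [mul_assoc] using N.mul_mem hi hn)⟩
  have hquot : {g : G | ∃ y ∈ rackClosure (Set.range a), y⁻¹ * g ∈ N} =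
      QuotientGroup.mk' N ⁻¹' (QuotientGroup.mk' N '' rackClosure (Set.range a)) := by
    ext g
    simp [QuotientGroup.eq]
  refine subset_antisymm ?_ ?_
  · rw [hquot]
    refine rackClosure_subset (((isSubrack_rackClosure _).image _).preimage _) fun g hg => ?_
    obtain ⟨i, hi⟩ := Set.mem_iUnion.1 hg
    exact ⟨a i, subset_rackClosure _ ⟨i, rfl⟩, QuotientGroup.eq.2 ((mem_leftCoset_iff _).1 hi)⟩
  · rintro g ⟨y, hy, hn⟩
    simpa using mul_mem_rackClosure_of_forall_mul_mem hcosets (rackClosure_mono hrange hy) hn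

/-- The join in the subrack lattice of the cosets a₁N, …, aₖN equals the union of
those cosets of N meeting (equivalently, covering) the subrack generated by
{a₁, …, aₖ}. -/
theorem stmt10 {G : Type*} [Group G] [Finite G] (N : Subgroup G) [N.Normal]
    (k : ℕ) (a : Fin k → G) :
    rackClosure (⋃ i : Fin k, (a i) • (N : Set G)) =
      {g : G | ∃ y ∈ rackClosure (Set.range a), y⁻¹ * g ∈ N} :=
  stmt10_general N k a
end

section
/- Let G be a finite solvable group. Then G has a chief-like series 1 = N₀ ≤ N₁ ≤ ⋯ ≤ Nₖ = G in which each quotient Nᵢ₊₁/Nᵢ is a maximal normal abelian subgroup of G/Nᵢ, and the minimal length k of such a series equals the derived length of G. -/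
/-- A maximal normal abelian subgroup: normal, abelian, and maximal among
normal abelian subgroups. -/
def IsMaxNormalAbelian {K : Type*} [Group K] (A : Subgroup K) : Prop :=
  A.Normal ∧ (∀ x ∈ A, ∀ y ∈ A, x * y = y * x) ∧
    ∀ B : Subgroup K, B.Normal → (∀ x ∈ B, ∀ y ∈ B, x * y = y * x) → A ≤ B → A = B

/-- A series 1 = N₀ ≤ ⋯ ≤ Nₖ = G of normal subgroups in which each quotient
Nᵢ₊₁/Nᵢ is a maximal normal abelian subgroup of G/Nᵢ. -/
def IsChiefLikeSeries {G : Type*} [Group G] (k : ℕ) (N : Fin (k + 1) → Subgroup G) :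
    Prop :=
  N 0 = ⊥ ∧ N (Fin.last k) = ⊤ ∧ (∀ i j : Fin (k + 1), i ≤ j → N i ≤ N j) ∧
    ∃ hn : ∀ i, (N i).Normal,
      ∀ i : Fin k,
        letI := hn i.castSucc
        IsMaxNormalAbelian
          (Subgroup.map (QuotientGroup.mk' (N i.castSucc)) (N i.succ))

/-- The derived length: the least n with the n-th derived subgroup trivial. -/
noncomputable def derivedLength (G : Type*) [Group G] : ℕ :=
  sInf {n : ℕ | derivedSeries G n = ⊥}

/-!
Everything is read inside `G`: `M / N` is a maximal normal abelian subgroup of `G / N` exactly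
when `M` is maximal among the normal subgroups `L` of `G` with `⁅L, L⁆ ≤ N`. If `N₀ ≤ ⋯ ≤ Nₖ` is
such a series, then `G⁽ᵏ⁻ⁱ⁾ ≤ Nᵢ` by downward induction, so `G⁽ᵏ⁾ ≤ N₀ = 1`. Conversely, if
`G⁽ᵈ⁾ = 1`, a series of length `d` is built upwards keeping `G⁽ᵈ⁻ⁱ⁾ ≤ Nᵢ`: take for `Nᵢ₊₁` a
maximal subgroup over `Nᵢ` that contains `G⁽ᵈ⁻ⁱ⁻¹⁾ Nᵢ`, which is normal and abelian modulo `Nᵢ`.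
-/

open Subgroup QuotientGroup

section

variable {G : Type*} [Group G]

def IsNormalAbelianMod (N L : Subgroup G) : Prop :=
  L.Normal ∧ ⁅L, L⁆ ≤ N

lemma Subgroup.commutator_self_eq_bot_iff_forall_mul_comm {H : Subgroup G} :
    ⁅H, H⁆ = ⊥ ↔ ∀ x ∈ H, ∀ y ∈ H, x * y = y * x := by
  rw [commutator_eq_bot_iff_le_centralizer]
  exact forall₂_congr fun x _ => forall₂_congr fun y _ => eq_comm

lemma commutator_le_iff_forall_mk_mul_comm (N : Subgroup G) [N.Normal] (X : Subgroup G) :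
    ⁅X, X⁆ ≤ N ↔ ∀ x ∈ X.map (mk' N), ∀ y ∈ X.map (mk' N), x * y = y * x := by
  rw [← commutator_self_eq_bot_iff_forall_mul_comm, ← map_commutator, Subgroup.map_eq_bot_iff,
    ker_mk']

lemma isNormalAbelianMod_sup {N D : Subgroup G} (hN : N.Normal) (hD : D.Normal)
    (hDN : ⁅D, D⁆ ≤ N) : IsNormalAbelianMod N (D ⊔ N) := by
  refine ⟨Subgroup.sup_normal D N, ?_⟩
  have hmap : (D ⊔ N).map (mk' N) = D.map (mk' N) := by
    rw [Subgroup.map_sup, (Subgroup.map_eq_bot_iff _).mpr (ker_mk' N).ge, sup_bot_eq]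
  rw [commutator_le_iff_forall_mk_mul_comm, hmap, ← commutator_le_iff_forall_mk_mul_comm]
  exact hDN

lemma isMaxNormalAbelian_map_mk'_iff {N M : Subgroup G} [N.Normal] (hNM : N ≤ M) :
    IsMaxNormalAbelian (M.map (mk' N)) ↔ Maximal (IsNormalAbelianMod N) M := by
  have hcomap : (M.map (mk' N)).comap (mk' N) = M := comap_map_eq_self (by rwa [ker_mk'])
  simp only [IsMaxNormalAbelian, ← commutator_le_iff_forall_mk_mul_comm N M]
  constructor
  · rintro ⟨hMn, hMab, hmax⟩
    refine ⟨⟨hcomap ▸ hMn.comap _, hMab⟩, fun L ⟨hLn, hLab⟩ hML => ?_⟩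
    have hmap := hmax _ (hLn.map _ (mk'_surjective N))
      ((commutator_le_iff_forall_mk_mul_comm N L).mp hLab) (map_mono hML)
    calc L ≤ (L.map (mk' N)).comap (mk' N) := le_comap_map _ _
      _ = M := by rw [← hmap, hcomap]
  · rintro ⟨⟨hMn, hMab⟩, hmax⟩
    refine ⟨hMn.map _ (mk'_surjective N), hMab, fun B hBn hBab hMB => ?_⟩
    have hB : (B.comap (mk' N)).map (mk' N) = B :=
      map_comap_eq_self_of_surjective (mk'_surjective N) B
    have hBM : B.comap (mk' N) ≤ M :=
      hmax ⟨hBn.comap _, by rwa [commutator_le_iff_forall_mk_mul_comm, hB]⟩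
        (map_le_iff_le_comap.mp hMB)
    exact le_antisymm hMB (hB ▸ map_mono hBM)

lemma isChiefLikeSeries_iff {k : ℕ} {N : Fin (k + 1) → Subgroup G} :
    IsChiefLikeSeries k N ↔ N 0 = ⊥ ∧ N (Fin.last k) = ⊤ ∧
      ∀ i : Fin k, N i.castSucc ≤ N i.succ ∧
        Maximal (IsNormalAbelianMod (N i.castSucc)) (N i.succ) := by
  constructor
  · rintro ⟨h0, hlast, hmono, hn, hmax⟩
    refine ⟨h0, hlast, fun i => ⟨hmono _ _ i.castSucc_le_succ, ?_⟩⟩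
    have := hn i.castSucc
    exact (isMaxNormalAbelian_map_mk'_iff (hmono _ _ i.castSucc_le_succ)).mp (hmax i)
  · rintro ⟨h0, hlast, hstep⟩
    have hn : ∀ i, (N i).Normal := Fin.cases (h0 ▸ normal_bot) fun i => (hstep i).2.prop.1
    refine ⟨h0, hlast, Fin.monotone_iff_le_succ.mpr fun i => (hstep i).1, hn, fun i => ?_⟩
    exact (isMaxNormalAbelian_map_mk'_iff (hstep i).1).mpr (hstep i).2

lemma derivedSeries_le_of_commutator_le {k : ℕ} {N : Fin (k + 1) → Subgroup G}
    (hlast : N (Fin.last k) = ⊤) (hstep : ∀ i : Fin k, ⁅N i.succ, N i.succ⁆ ≤ N i.castSucc)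
    (i : Fin (k + 1)) : derivedSeries G (k - i) ≤ N i := by
  induction i using Fin.reverseInduction with
  | last => simp [hlast]
  | cast i ih =>
    have hk : k - i.castSucc = k - i.succ + 1 := by
      simp only [Fin.val_castSucc, Fin.val_succ]; omega
    calc derivedSeries G (k - i.castSucc)
        = ⁅derivedSeries G (k - i.succ), derivedSeries G (k - i.succ)⁆ := by
          rw [hk, derivedSeries_succ]
      _ ≤ ⁅N i.succ, N i.succ⁆ := commutator_mono ih ih
      _ ≤ N i.castSucc := hstep i

lemma IsChiefLikeSeries.derivedSeries_eq_bot {k : ℕ} {N : Fin (k + 1) → Subgroup G}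
    (hN : IsChiefLikeSeries k N) : derivedSeries G k = ⊥ := by
  obtain ⟨h0, hlast, hstep⟩ := isChiefLikeSeries_iff.mp hN
  have := derivedSeries_le_of_commutator_le hlast (fun i => (hstep i).2.prop.2) 0
  rwa [Fin.val_zero, Nat.sub_zero, h0, le_bot_iff] at this

lemma exists_maximal_isNormalAbelianMod_chain [Finite G] {d : ℕ} (hd : derivedSeries G d = ⊥) :
    ∃ N : ℕ → Subgroup G, N 0 = ⊥ ∧ (∀ i, derivedSeries G (d - i) ≤ N i) ∧
      ∀ i, N i ≤ N (i + 1) ∧ Maximal (IsNormalAbelianMod (N i)) (N (i + 1)) := by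
  -- the choice is made total in `D`, so that `choose` returns a plain function
  have hnext : ∀ N D : Subgroup G,
      ∃ M, IsNormalAbelianMod N D → D ≤ M ∧ Maximal (IsNormalAbelianMod N) M := by
    intro N D
    by_cases hD : IsNormalAbelianMod N D
    · exact (Finite.exists_le_maximal hD).imp fun _ hM _ => hM
    · exact ⟨⊥, fun h => absurd h hD⟩
  choose next hnext using hnext
  let N : ℕ → Subgroup G := fun i =>
    Nat.rec ⊥ (fun i Ni => next Ni (derivedSeries G (d - (i + 1)) ⊔ Ni)) i
  have hadm (i : ℕ) (hn : (N i).Normal) (hle : derivedSeries G (d - i) ≤ N i) :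
      IsNormalAbelianMod (N i) (derivedSeries G (d - (i + 1)) ⊔ N i) := by
    refine isNormalAbelianMod_sup hn (derivedSeries_normal G _) ?_
    calc ⁅derivedSeries G (d - (i + 1)), derivedSeries G (d - (i + 1))⁆
        = derivedSeries G (d - (i + 1) + 1) := (derivedSeries_succ G _).symm
      _ ≤ derivedSeries G (d - i) := derivedSeries_antitone G (by omega)
      _ ≤ N i := hle
  have hinv (i : ℕ) : (N i).Normal ∧ derivedSeries G (d - i) ≤ N i := by
    induction i with
    | zero => exact ⟨normal_bot, hd.le⟩
    | succ i ih =>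
      obtain ⟨hle, hmax⟩ := hnext _ _ (hadm i ih.1 ih.2)
      exact ⟨hmax.prop.1, le_sup_left.trans hle⟩
  refine ⟨N, rfl, fun i => (hinv i).2, fun i => ?_⟩
  obtain ⟨hle, hmax⟩ := hnext _ _ (hadm i (hinv i).1 (hinv i).2)
  exact ⟨le_sup_right.trans hle, hmax⟩

lemma exists_isChiefLikeSeries_of_derivedSeries_eq_bot [Finite G] {d : ℕ}
    (hd : derivedSeries G d = ⊥) : ∃ N : Fin (d + 1) → Subgroup G, IsChiefLikeSeries d N := by
  obtain ⟨N, h0, hder, hstep⟩ := exists_maximal_isNormalAbelianMod_chain hd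
  refine ⟨fun i => N i, isChiefLikeSeries_iff.mpr ⟨h0, top_unique ?_, fun i => hstep i⟩⟩
  simpa using hder d

end

/-- A finite solvable group has a chief-like series, and the minimal length of
such a series equals the derived length. -/
theorem stmt14 {G : Type*} [Group G] [Finite G] (hG : IsSolvable G) :
    (∃ (k : ℕ) (N : Fin (k + 1) → Subgroup G), IsChiefLikeSeries k N) ∧
    sInf {k : ℕ | ∃ N : Fin (k + 1) → Subgroup G, IsChiefLikeSeries k N} =
      derivedLength G := by
  have hd : derivedSeries G (derivedLength G) = ⊥ :=
    Nat.sInf_mem ((Group.isSolvable_def G).mp hG)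
  have hleast : IsLeast {k : ℕ | ∃ N : Fin (k + 1) → Subgroup G, IsChiefLikeSeries k N}
      (derivedLength G) :=
    ⟨exists_isChiefLikeSeries_of_derivedSeries_eq_bot hd,
      fun _ ⟨_, hN⟩ => Nat.sInf_le hN.derivedSeries_eq_bot⟩
  exact ⟨⟨_, hleast.1⟩, hleast.csInf_eq⟩
end

section
/- Let G be a finite group. A singleton {x} is such that the union {x} ∪ C is a subrack of (G, ▷) for every conjugacy class C of G if and only if x ∈ Z(G). Consequently, the number of central elements of G is determined by the isomorphism type of the subrack lattice R(G). -/
/-- The subrack lattice of a group, as a poset of conjugation-closed subsets. -/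
def SubrackLattice (G : Type*) [Group G] : Type _ := {S : Set G // IsSubrack S}

instance {G : Type*} [Group G] : PartialOrder (SubrackLattice G) :=
  Subtype.partialOrder _

/-!
If `x` is not central and `g` does not commute with `x`, then `g ▷ x ≠ x` must lie in the class
of `g`, so every element outside the centralizer `C` of `x` is conjugate to `x`. Then the class
of `x`, whose size is `i = [G : C]`, has at least `|G| - |C| + 1 = |C| (i - 1) + 1` elements;
as `|C| ≥ 2` (it contains `x ≠ 1`), this forces `i = 1`.

In the subrack lattice the atoms are the singletons, and `{x} ∪ S` is a subrack for every
subrack `S` exactly when `x` is central. The latter is an order-theoretic property of the atom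
`{x}`: the join of `{x}` with any `S` contains no atom besides `{x}` that is not already in `S`.
Hence central elements correspond to atoms with this property, which any order isomorphism
preserves.
-/

section

open Subgroup

variable {G : Type*} [Group G]

theorem isSubrack_setOf_isConj (g : G) : IsSubrack {y | IsConj g y} :=
  fun a _ _ hb => hb.trans (isConj_iff.2 ⟨a, rfl⟩)

theorem IsSubrack.insert_of_mem_center {S : Set G} (hS : IsSubrack S) {x : G}
    (hx : x ∈ center G) : IsSubrack (insert x S) := by
  have conj_x : ∀ g : G, g * x * g⁻¹ = x := fun g => by
    rw [mem_center_iff.1 hx g, mul_inv_cancel_right]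
  have x_conj : ∀ g : G, x * g * x⁻¹ = g := fun g => by
    rw [← mem_center_iff.1 hx g, mul_inv_cancel_right]
  rintro a (ha | ha) b (hb | hb)
  · rw [ha, hb, conj_x]; exact Set.mem_insert x S
  · rw [ha, x_conj]; exact Or.inr hb
  · rw [hb, conj_x]; exact Set.mem_insert x S
  · exact Or.inr (hS a ha b hb)

theorem card_centralizer_mul_ncard_setOf_isConj (x : G) :
    Nat.card (centralizer {x}) * {g | IsConj x g}.ncard = Nat.card G := by
  have h := (MulAction.stabilizer (ConjAct G) x).card_mul_index
  rwa [MulAction.index_stabilizer, ← nat_card_centralizer_nat_card_stabilizer,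
    ConjAct.orbit_eq_carrier_conjClasses] at h

theorem mem_center_of_isConj_of_notMem_centralizer [Finite G] {x : G}
    (h : ∀ g ∉ centralizer {x}, IsConj x g) : x ∈ center G := by
  by_cases hx1 : x = 1
  · exact hx1 ▸ one_mem _
  set C := centralizer {x}
  have hxC : x ∈ C := mem_centralizer_singleton_iff.2 rfl
  have two_le_card : 2 ≤ Nat.card C :=
    (one_lt_card_iff_ne_bot C).2 fun hbot => hx1 (mem_bot.1 (hbot ▸ hxC))
  have compl_subset : insert x (C : Set G)ᶜ ⊆ {g | IsConj x g} := by
    rintro g (rfl | hg)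
    · exact IsConj.refl g
    · exact h g hg
  have card_compl : (C : Set G)ᶜ.ncard + 1 ≤ {g | IsConj x g}.ncard := by
    rw [← Set.ncard_insert_of_notMem (Set.notMem_compl_iff.2 hxC)]
    exact Set.ncard_le_ncard compl_subset
  have card_split := Set.ncard_add_ncard_compl (C : Set G)
  rw [← Nat.card_coe_set_eq, SetLike.coe_sort_coe] at card_split
  have orbit_stabilizer := card_centralizer_mul_ncard_setOf_isConj x
  have hC : C = ⊤ := (card_eq_iff_eq_top C).1 (by nlinarith)
  exact mem_center_iff.2 fun g => mem_centralizer_singleton_iff.1 (eq_top_iff.1 hC (mem_top g))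

theorem isSubrack_singleton_union_setOf_isConj_iff [Finite G] (x : G) :
    (∀ g : G, IsSubrack ({x} ∪ {y | IsConj g y})) ↔ x ∈ center G := by
  refine ⟨fun h => mem_center_of_isConj_of_notMem_centralizer fun g hg => ?_,
    fun hx g => Set.singleton_union ▸ (isSubrack_setOf_isConj g).insert_of_mem_center hx⟩
  rcases h g g (Or.inr (IsConj.refl g)) x (Or.inl rfl) with hgx | hgx
  · exact absurd (mem_centralizer_singleton_iff.2 (mul_inv_eq_iff_eq_mul.1 hgx)) hg
  · exact (isConj_iff.2 ⟨g, rfl⟩).trans hgx.symm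

/-- An atom `a` is *inert* if joining it to any `s` creates no atom other than `a` itself. -/
def IsInertAtom {α : Type*} [PartialOrder α] [OrderBot α] (a : α) : Prop :=
  IsAtom a ∧ ∀ s c, IsLUB {a, s} c → ∀ b, IsAtom b → b ≤ c → b ≤ s ∨ b = a

theorem OrderIso.isInertAtom_iff {α β : Type*} [PartialOrder α] [OrderBot α] [PartialOrder β]
    [OrderBot β] (e : α ≃o β) (a : α) : IsInertAtom (e a) ↔ IsInertAtom a := by
  have isLUB_pair : ∀ s c, IsLUB {e a, e s} (e c) ↔ IsLUB {a, s} c := fun s c => by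
    rw [← Set.image_pair, e.isLUB_image']
  simp only [IsInertAtom, e.isAtom_iff, e.surjective.forall, isLUB_pair, e.le_iff_le,
    e.apply_eq_iff_eq]

namespace SubrackLattice

instance : OrderBot (SubrackLattice G) where
  bot := ⟨∅, fun _ ha => ha.elim⟩
  bot_le S := Set.empty_subset S.1

theorem le_def {S T : SubrackLattice G} : S ≤ T ↔ S.1 ⊆ T.1 := Iff.rfl

def singleton (x : G) : SubrackLattice G :=
  ⟨{x}, by rintro a rfl b rfl; simp⟩

theorem singleton_le_iff {x : G} {S : SubrackLattice G} : singleton x ≤ S ↔ x ∈ S.1 :=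
  Set.singleton_subset_iff

theorem singleton_injective : Function.Injective (singleton (G := G)) :=
  fun _ _ h => Set.singleton_eq_singleton_iff.1 (congrArg Subtype.val h)

theorem isAtom_iff {S : SubrackLattice G} : IsAtom S ↔ ∃ x, S = singleton x := by
  constructor
  · rintro ⟨hS, hmin⟩
    obtain ⟨x, hx⟩ := Set.nonempty_iff_ne_empty.2 fun h => hS (Subtype.ext h)
    refine ⟨x, by_contra fun hne => ?_⟩
    have hlt : singleton x < S := lt_of_le_of_ne (singleton_le_iff.2 hx) (Ne.symm hne)
    exact Set.singleton_ne_empty x (congrArg Subtype.val (hmin _ hlt))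
  · rintro ⟨x, rfl⟩
    refine ⟨fun h => Set.singleton_ne_empty x (congrArg Subtype.val h), fun T hT => ?_⟩
    rcases Set.subset_singleton_iff_eq.1 (le_def.1 hT.le) with h | h
    · exact Subtype.ext h
    · exact absurd (Subtype.ext h) hT.ne

def closure (S : Set G) : SubrackLattice G :=
  ⟨⋂₀ {T | IsSubrack T ∧ S ⊆ T}, fun a ha b hb =>
    Set.mem_sInter.2 fun T hT => hT.1 a (ha T hT) b (hb T hT)⟩

theorem subset_closure (S : Set G) : S ⊆ (closure S).1 :=
  fun _ hx => Set.mem_sInter.2 fun _ hT => hT.2 hx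

theorem closure_le {S : Set G} {T : SubrackLattice G} (h : S ⊆ T.1) : closure S ≤ T :=
  Set.sInter_subset_of_mem ⟨T.2, h⟩

theorem isLUB_closure_union (S T : SubrackLattice G) : IsLUB {S, T} (closure (S.1 ∪ T.1)) := by
  refine ⟨?_, fun U hU => closure_le (Set.union_subset (hU (by simp)) (hU (by simp)))⟩
  rintro U (rfl | rfl)
  · exact Set.subset_union_left.trans (subset_closure _)
  · exact Set.subset_union_right.trans (subset_closure _)

theorem isInertAtom_singleton_iff (x : G) : IsInertAtom (singleton x) ↔ x ∈ center G := by
  constructor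
  · rintro ⟨-, hinert⟩
    refine mem_center_iff.2 fun y => ?_
    set c := closure ({x} ∪ {y})
    have hxy : x * y * x⁻¹ ∈ c.1 :=
      c.2 x (subset_closure _ (Or.inl rfl)) y (subset_closure _ (Or.inr rfl))
    rcases hinert (singleton y) c (isLUB_closure_union _ _) _ (isAtom_iff.2 ⟨_, rfl⟩)
      (singleton_le_iff.2 hxy) with h | h
    · exact (mul_inv_eq_iff_eq_mul.1 (singleton_le_iff.1 h)).symm
    · rw [mul_left_cancel (mul_inv_eq_iff_eq_mul.1 (singleton_injective h))]
  · intro hx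
    refine ⟨isAtom_iff.2 ⟨x, rfl⟩, fun s c hc b hb hbc => ?_⟩
    obtain ⟨z, rfl⟩ := isAtom_iff.1 hb
    let U : SubrackLattice G := ⟨insert x s.1, s.2.insert_of_mem_center hx⟩
    have hcU : c ≤ U := hc.2 <| by
      rintro _ (rfl | rfl)
      exacts [singleton_le_iff.2 (Set.mem_insert x _), Set.subset_insert x _]
    rcases hcU (singleton_le_iff.1 hbc) with rfl | hz
    · exact Or.inr rfl
    · exact Or.inl (singleton_le_iff.2 hz)

theorem card_center_eq_card_isInertAtom :
    Nat.card (center G) = Nat.card {S : SubrackLattice G // IsInertAtom S} := by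
  refine Nat.card_congr (Equiv.ofBijective
    (fun x => ⟨singleton x.1, (isInertAtom_singleton_iff x.1).2 x.2⟩) ⟨?_, ?_⟩)
  · exact fun x y hxy => Subtype.ext (singleton_injective (congrArg Subtype.val hxy))
  · rintro ⟨S, hS⟩
    obtain ⟨z, rfl⟩ := isAtom_iff.1 hS.1
    exact ⟨⟨z, (isInertAtom_singleton_iff z).1 hS⟩, rfl⟩

end SubrackLattice

end

/-- x is central iff {x} ∪ C is a subrack for every conjugacy class C; consequently
the number of central elements is determined by the subrack lattice. -/
theorem stmt19 {G : Type*} [Group G] [Finite G] :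
    (∀ x : G,
      (∀ g : G, IsSubrack ({x} ∪ {y : G | IsConj g y})) ↔ x ∈ Subgroup.center G) ∧
    (∀ (H : Type*) (_ : Group H) (_ : Finite H),
      Nonempty (SubrackLattice G ≃o SubrackLattice H) →
      Nat.card (Subgroup.center G) = Nat.card (Subgroup.center H)) := by
  refine ⟨isSubrack_singleton_union_setOf_isConj_iff, fun H _ _ ⟨e⟩ => ?_⟩
  rw [SubrackLattice.card_center_eq_card_isInertAtom,
    SubrackLattice.card_center_eq_card_isInertAtom]
  exact Nat.card_congr (e.toEquiv.subtypeEquiv fun S => (e.isInertAtom_iff S).symm)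
end
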